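/- arXiv:2311.11409 — 4 statements merged into one kernel-verified Lean document; each statement's English description precedes it below -/
import Mathlib

section
/- Let p : E → B be a covering map between topological spaces, let e ∈ E and b = p(e). A homotopy class [γ] ∈ π₁(B, b) lies in the image of the homomorphism p⋆ : π₁(E, e) → π₁(B, b) induced by p if and only if the unique lift of γ to E starting at e is a closed loop, i.e. ends at e. -/
attribute [local instance] Path.Homotopic.setoid

open CategoryTheory

universe u

section Lifting

open unitInterval Set


variable {E B : Type u} [TopologicalSpace E] [TopologicalSpace B] {p : E → B}

private lemma mono_val : Monotone (Subtype.val : I → ℝ) := fun _ _ h => h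

/-- Metric balls in the unit interval are preconnected. -/
lemma ball_preconnected' (s₀ : I) (ρ : ℝ) : _root_.IsPreconnected {s : I | dist s s₀ < ρ} := by
  rw [← Topology.IsInducing.subtypeVal.isPreconnected_image]
  have himg : Subtype.val '' {s : I | dist s s₀ < ρ} =
      {x : ℝ | 0 ≤ x ∧ x ≤ 1 ∧ |x - (s₀ : ℝ)| < ρ} := by
    ext x
    constructor
    · rintro ⟨s, hs, rfl⟩
      exact ⟨s.2.1, s.2.2, by simpa [Subtype.dist_eq, Real.dist_eq] using hs⟩
    · rintro ⟨h0, h1, h⟩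
      exact ⟨⟨x, h0, h1⟩, by simpa [Subtype.dist_eq, Real.dist_eq] using h, rfl⟩
  rw [himg]
  apply Set.OrdConnected.isPreconnected
  constructor
  rintro a ⟨ha0, ha1, ha⟩ b ⟨hb0, hb1, hb⟩ x ⟨hax, hxb⟩
  refine ⟨ha0.trans hax, hxb.trans hb1, ?_⟩
  rw [abs_lt] at ha hb ⊢
  constructor
  · linarith [ha.1]
  · linarith [hb.2]

/-- Local (in the parameter `s`) lifting of a map `H : I × I → B` along a covering map,
with prescribed constant initial value. -/
theorem strip_lift (hp : IsCoveringMap p) (H : C(I × I, B)) (e : E)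
    (hbase : ∀ s, H (s, 0) = p e) (s₀ : I) :
    ∃ δ > (0 : ℝ), ∃ K : C(I × I, E), (∀ s, K (s, 0) = e) ∧
      ∀ s : I, dist s s₀ < δ → ∀ u, p (K (s, u)) = H (s, u) := by
  set T : Set ℝ := {t | t ∈ Set.Icc (0:ℝ) 1 ∧ ∃ δ > (0:ℝ), ∃ K : C(I × I, E),
    (∀ s, K (s, 0) = e) ∧
      ∀ s : I, dist s s₀ < δ → ∀ u : I, (u : ℝ) ≤ t → p (K (s, u)) = H (s, u)} with hT
  have h0T : (0:ℝ) ∈ T := by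
    refine ⟨⟨le_rfl, zero_le_one⟩, 1, one_pos, ContinuousMap.const _ e, fun s => rfl, ?_⟩
    intro s _ u hu
    have hu0 : u = 0 := Subtype.ext (le_antisymm hu u.2.1)
    subst hu0
    exact (hbase s).symm
  have hbdd : BddAbove T := ⟨1, fun t ht => ht.1.2⟩
  have hne : T.Nonempty := ⟨0, h0T⟩
  set c := sSup T with hc
  have hc0 : 0 ≤ c := le_csSup hbdd h0T
  have hc1 : c ≤ 1 := csSup_le hne fun t ht => ht.1.2
  have hstep : ∃ ε > (0:ℝ), min 1 (c + ε) ∈ T := by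
    set tc : I := ⟨c, hc0, hc1⟩ with htc
    haveI hfne : Nonempty (p ⁻¹' {H (s₀, tc)}) := by
      by_contra hem
      rw [not_nonempty_iff] at hem
      obtain ⟨U, hxU, hUo, -, Φ, -⟩ := (hp (H (s₀, tc))).2
      obtain ⟨ε, εpos, hball⟩ := Metric.mem_nhds_iff.mp
        (H.continuous.continuousAt.preimage_mem_nhds (hUo.mem_nhds hxU))
      obtain ⟨t, htT, hct⟩ : ∃ t ∈ T, c - ε < t := exists_lt_of_lt_csSup hne (by linarith)
      have htc' : t ≤ c := le_csSup hbdd htT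
      obtain ⟨⟨ht0, ht1⟩, δ, δpos, K, hK0, hKl⟩ := htT
      have hd : dist (⟨t, ht0, ht1⟩ : I) tc < ε := by
        rw [Subtype.dist_eq, Real.dist_eq, abs_lt]
        constructor <;> simp only [htc] <;> linarith
      have hmem : H (s₀, ⟨t, ht0, ht1⟩) ∈ U :=
        hball (Metric.mem_ball.mpr (by rw [Prod.dist_eq, dist_self]; exact max_lt εpos hd))
      rw [← hKl s₀ (by simpa using δpos) _ le_rfl] at hmem
      exact isEmptyElim (Φ ⟨_, hmem⟩).2
    set triv := (hp (H (s₀, tc))).toTrivialization with htriv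
    haveI hdisc : DiscreteTopology (p ⁻¹' {H (s₀, tc)} : Set E) := (hp (H (s₀, tc))).1
    have hW : H (s₀, tc) ∈ triv.baseSet :=
      IsEvenlyCovered.mem_toTrivialization_baseSet (hp (H (s₀, tc)))
    obtain ⟨ε, εpos, hε⟩ : ∃ ε > (0:ℝ), ∀ q : I × I, dist q (s₀, tc) < ε →
        H q ∈ triv.baseSet := by
      have hnh : H ⁻¹' triv.baseSet ∈ nhds (s₀, tc) :=
        H.continuous.continuousAt.preimage_mem_nhds (triv.open_baseSet.mem_nhds hW)
      rw [Metric.mem_nhds_iff] at hnh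
      obtain ⟨ε, εpos, hball⟩ := hnh
      exact ⟨ε, εpos, fun q hq => hball hq⟩
    have hε' : ∀ s u : I, dist s s₀ < ε → dist u tc < ε → H (s, u) ∈ triv.baseSet := by
      intro s u h1 h2
      exact hε (s, u) (by rw [Prod.dist_eq]; exact max_lt h1 h2)
    obtain ⟨t, htT, hct⟩ : ∃ t ∈ T, c - ε < t :=
      exists_lt_of_lt_csSup hne (by linarith)
    have htc' : t ≤ c := le_csSup hbdd htT
    obtain ⟨⟨ht0, ht1⟩, δ, δpos, K, hK0, hKl⟩ := htT
    set tI : I := ⟨t, ht0, ht1⟩ with htI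
    have hdtc : dist tI tc < ε := by
      rw [Subtype.dist_eq, Real.dist_eq, abs_lt]
      constructor <;> simp only [htI, htc] <;> linarith
    set δ' : ℝ := min δ ε with hδ'def
    have hδ' : 0 < δ' := lt_min δpos εpos
    set r : ℝ := δ' / 2 with hrdef
    have hr : 0 < r := by positivity
    have hrδ' : r < δ' := by simp only [hrdef]; linarith
    set t' : ℝ := min 1 (c + ε / 2) with ht'def
    have ht'0 : 0 ≤ t' := le_min zero_le_one (by linarith)
    have ht'1 : t' ≤ 1 := min_le_left _ _
    set tI' : I := ⟨t', ht'0, ht'1⟩ with htI'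
    have htt' : t ≤ t' := le_min ht1 (by linarith)
    have htt'I : tI ≤ tI' := htt'
    -- the clamping map
    have ha0 : (0:ℝ) ≤ max ((s₀:ℝ) - r) 0 := le_max_right _ _
    have ha1 : max ((s₀:ℝ) - r) 0 ≤ 1 := max_le (by linarith [s₀.2.2]) zero_le_one
    set a : I := ⟨max ((s₀:ℝ) - r) 0, ha0, ha1⟩ with haI
    have hb0 : (0:ℝ) ≤ min ((s₀:ℝ) + r) 1 := le_min (by linarith [s₀.2.1]) zero_le_one
    set b : I := ⟨min ((s₀:ℝ) + r) 1, hb0, min_le_right _ _⟩ with hbI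
    have hab : a ≤ b := by
      show (a:ℝ) ≤ (b:ℝ)
      have h1 : (a:ℝ) ≤ s₀ := max_le (by linarith) s₀.2.1
      have h2 : (s₀:ℝ) ≤ b := le_min (by linarith) s₀.2.2
      linarith
    set cl : I → I := fun s => min (max s a) b with hcl
    have hcl_cont : Continuous cl := (continuous_id.max continuous_const).min continuous_const
    have hclval : ∀ s : I, ((cl s : I) : ℝ) = min (max (s:ℝ) (a:ℝ)) (b:ℝ) := by
      intro s
      simp only [hcl, mono_val.map_min, mono_val.map_max]
    have hcl_dist : ∀ s, dist (cl s) s₀ < δ' := by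
      intro s
      rw [Subtype.dist_eq, Real.dist_eq, abs_lt, hclval]
      have h1 : (a:ℝ) ≤ min (max (s:ℝ) (a:ℝ)) (b:ℝ) := le_min (le_max_right _ _) hab
      have h2 : min (max (s:ℝ) (a:ℝ)) (b:ℝ) ≤ (b:ℝ) := min_le_right _ _
      have h3 : (s₀:ℝ) - r ≤ (a:ℝ) := le_max_left _ _
      have h4 : (b:ℝ) ≤ (s₀:ℝ) + r := min_le_left _ _
      constructor <;> linarith
    have hcl_eq : ∀ s, dist s s₀ < r → cl s = s := by
      intro s hs
      rw [Subtype.dist_eq, Real.dist_eq, abs_lt] at hs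
      have has : a ≤ s := by
        show (a:ℝ) ≤ (s:ℝ)
        exact max_le (by linarith) s.2.1
      have hsb : s ≤ b := by
        show (s:ℝ) ≤ (b:ℝ)
        exact le_min (by linarith) s.2.2
      simp only [hcl, max_eq_left has, min_eq_left hsb]
    -- source membership and constancy of the fibre coordinate
    have hlift_t : ∀ s : I, dist s s₀ < δ' → p (K (s, tI)) = H (s, tI) :=
      fun s hs => hKl s (lt_of_lt_of_le hs (min_le_left _ _)) tI le_rfl
    have hsrc : ∀ s : I, dist s s₀ < δ' → K (s, tI) ∈ triv.source := by
      intro s hs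
      rw [triv.mem_source, hlift_t s hs]
      exact hε' s tI (lt_of_lt_of_le hs (min_le_right _ _)) hdtc
    set c₀ := (triv (K (s₀, tI))).2 with hc₀
    have hs₀ball : dist s₀ s₀ < δ' := by simpa using hδ'
    have hsnd : ∀ s : I, dist s s₀ < δ' → (triv (K (s, tI))).2 = c₀ := by
      intro s hs
      refine IsPreconnected.constant (ball_preconnected' s₀ δ')
        (f := fun s : I => (triv (K (s, tI))).2) ?_ hs hs₀ball
      have hcont : ContinuousOn (fun s : I => triv (K (s, tI))) {s : I | dist s s₀ < δ'} := by
        apply ContinuousOn.comp (g := fun x : E => triv x) (f := fun s : I => K (s, tI))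
          (t := triv.source) triv.toPartialHomeomorph.continuousOn
          ((K.continuous.comp (continuous_id.prodMk continuous_const)).continuousOn)
        exact fun s hs => hsrc s hs
      exact continuous_snd.comp_continuousOn hcont
    set sec : B → E := fun v => triv.toPartialHomeomorph.symm (v, c₀) with hsec
    have hsecp : ∀ v ∈ triv.baseSet, p (sec v) = v := fun v hv => triv.proj_symm_apply' hv
    have hsecK : ∀ s : I, dist s s₀ < δ' → sec (H (s, tI)) = K (s, tI) := by
      intro s hs
      have h1 : H (s, tI) = p (K (s, tI)) := (hlift_t s hs).symm
      simp only [hsec]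
      rw [h1, ← hsnd s hs]
      exact triv.symm_apply_mk_proj (hsrc s hs)
    -- the clamped second coordinate stays in the good window
    have hwin : ∀ u : I, dist (min (max u tI) tI') tc < ε := by
      intro u
      have h1 : (tI:ℝ) ≤ ((min (max u tI) tI' : I):ℝ) := by
        rw [mono_val.map_min, mono_val.map_max]
        exact le_min (le_max_right _ _) htt'
      have h2 : ((min (max u tI) tI' : I):ℝ) ≤ t' := by
        rw [mono_val.map_min]
        exact min_le_right _ _
      rw [Subtype.dist_eq, Real.dist_eq, abs_lt]
      have h3 : t' ≤ c + ε / 2 := min_le_right _ _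
      constructor <;> simp only [htI] at h1 <;> linarith
    -- the extended lift
    classical
    set K' : I × I → E := fun q =>
      if q.2 ≤ tI then K (cl q.1, q.2) else sec (H (cl q.1, min (max q.2 tI) tI')) with hK'
    have hK'c : Continuous K' := by
      refine Continuous.if_le ?_ ?_ continuous_snd continuous_const ?_
      · exact K.continuous.comp ((hcl_cont.comp continuous_fst).prodMk continuous_snd)
      · have hmem : ∀ q : I × I,
            (H (cl q.1, min (max q.2 tI) tI'), c₀) ∈ triv.target := by
          intro q
          rw [triv.mem_target]
          exact hε' (cl q.1) _ (lt_of_lt_of_le (hcl_dist q.1) (min_le_right _ _)) (hwin q.2)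
        refine (triv.toPartialHomeomorph.continuousOn_symm).comp_continuous ?_ hmem
        refine Continuous.prodMk ?_ continuous_const
        exact H.continuous.comp ((hcl_cont.comp continuous_fst).prodMk
          (((continuous_snd.max continuous_const)).min continuous_const))
      · rintro ⟨s, u⟩ hu
        have hu' : u = tI := hu
        show K (cl s, u) = sec (H (cl s, min (max u tI) tI'))
        rw [hu', max_self, min_eq_left htt'I, hsecK (cl s) (hcl_dist s)]
    refine ⟨ε / 2, by linarith, ⟨ht'0, ht'1⟩, r, hr, ⟨K', hK'c⟩, ?_, ?_⟩
    · intro s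
      show K' (s, 0) = e
      simp only [hK']
      rw [if_pos (show (0:I) ≤ tI from ht0)]
      exact hK0 (cl s)
    · intro s hs u hu
      have hcls : cl s = s := hcl_eq s hs
      show p (K' (s, u)) = H (s, u)
      simp only [hK', hcls]
      by_cases h : u ≤ tI
      · rw [if_pos h]
        exact hKl s (lt_of_lt_of_le (lt_trans hs hrδ') (min_le_left _ _)) u h
      · rw [if_neg h]
        push_neg at h
        have hmax : max u tI = u := max_eq_left (le_of_lt h)
        have hmin : min u tI' = u := min_eq_left hu
        rw [hmax, hmin]
        refine hsecp _ (hε' s u (lt_of_lt_of_le (lt_trans hs hrδ') (min_le_right _ _)) ?_)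
        rw [Subtype.dist_eq, Real.dist_eq, abs_lt]
        have h1 : t < (u:ℝ) := h
        have h2 : (u:ℝ) ≤ t' := hu
        have h3 : t' ≤ c + ε / 2 := min_le_right _ _
        constructor <;> linarith
  obtain ⟨ε, εpos, hext⟩ := hstep
  have hle : min 1 (c + ε) ≤ c := le_csSup hbdd hext
  have hc1' : c = 1 := by
    by_contra hne1
    have : c < 1 := lt_of_le_of_ne hc1 hne1
    have : min 1 (c + ε) > c := lt_min this (by linarith)
    linarith
  rw [hc1'] at hext
  have h1T : (1:ℝ) ∈ T := by
    have : min 1 (1 + ε) = 1 := min_eq_left (by linarith)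
    rwa [this] at hext
  obtain ⟨-, δ, δpos, K, hK0, hKl⟩ := h1T
  exact ⟨δ, δpos, K, hK0, fun s hs u => hKl s hs u u.2.2⟩

/-- Monodromy: for a homotopy `H` which is constant at `u = 0` (with value `p e`) and
at `u = 1`, the lifts of `H (0, ·)` and `H (1, ·)` starting at `e` have the same endpoint. -/
theorem monodromy_endpoint (hp : IsCoveringMap p) (H : C(I × I, B)) (e : E)
    (hbase : ∀ s, H (s, 0) = p e) (htop : ∀ s : I, H (s, 1) = H (0, 1))
    {Γ Γ' : C(I, E)} (hΓ : ∀ u, p (Γ u) = H (0, u)) (hΓ0 : Γ 0 = e)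
    (hΓ' : ∀ u, p (Γ' u) = H (1, u)) (hΓ'0 : Γ' 0 = e) : Γ 1 = Γ' 1 := by
  haveI : DiscreteTopology (p ⁻¹' {H (0, 1)} : Set E) := (hp (H (0, 1))).1
  have A : ∀ s : I, ∃ L : C(I, E), L 0 = e ∧ ∀ u, p (L u) = H (s, u) := by
    intro s
    obtain ⟨δ, δpos, K, hK0, hKl⟩ := strip_lift hp H e hbase s
    refine ⟨K.comp (ContinuousMap.const I s |>.prodMk (ContinuousMap.id I)), ?_, ?_⟩
    · exact hK0 s
    · intro u
      exact hKl s (by simpa using δpos) u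
  choose L hL0 hLl using A
  set g : I → E := fun s => L s 1 with hg
  have hloc : ∀ s₀ : I, ∃ ρ > (0:ℝ), ∀ s, dist s s₀ < ρ → g s = g s₀ := by
    intro s₀
    obtain ⟨δ, δpos, K, hK0, hKl⟩ := strip_lift hp H e hbase s₀
    have hLK : ∀ s, dist s s₀ < δ → ∀ u, L s u = K (s, u) := by
      intro s hs
      have heq : (fun u => L s u) = fun u => K (s, u) := by
        refine hp.eq_of_comp_eq (L s).continuous
          (K.continuous.comp (continuous_const.prodMk continuous_id)) ?_ 0 ?_
        · funext u
          show p (L s u) = p (K (s, u))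
          rw [hLl s u, hKl s hs u]
        · rw [hL0 s, hK0 s]
      exact fun u => congrFun heq u
    have hs₀ball : dist s₀ s₀ < δ := by simpa using δpos
    have hconst : ∀ s, dist s s₀ < δ → K (s, 1) = K (s₀, 1) := by
      intro s hs
      refine IsPreconnected.constant_of_mapsTo (ball_preconnected' s₀ δ)
        (T := p ⁻¹' {H (0, 1)}) (hT := isDiscrete_iff_discreteTopology.mpr inferInstance) (f := fun s : I => K (s, 1)) ?_ ?_ hs hs₀ball
      · exact (K.continuous.comp (continuous_id.prodMk continuous_const)).continuousOn
      · intro s hs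
        simp only [Set.mem_preimage, Set.mem_singleton_iff]
        rw [hKl s hs 1, htop s]
    refine ⟨δ, δpos, fun s hs => ?_⟩
    simp only [hg]
    rw [hLK s hs 1, hconst s hs, ← hLK s₀ hs₀ball 1]
  have hlc : IsLocallyConstant g := by
    rw [IsLocallyConstant.iff_exists_open]
    intro s₀
    obtain ⟨ρ, ρpos, hρ⟩ := hloc s₀
    exact ⟨Metric.ball s₀ ρ, Metric.isOpen_ball, Metric.mem_ball_self ρpos,
      fun s hs => by rw [hρ s hs]⟩
  have hkey : g 0 = g 1 := hlc.apply_eq_of_preconnectedSpace 0 1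
  have h0 : g 0 = Γ 1 := by
    have heq : (fun u => L 0 u) = fun u => Γ u := by
      refine hp.eq_of_comp_eq (L 0).continuous Γ.continuous ?_ 0 ?_
      · funext u
        show p (L 0 u) = p (Γ u)
        rw [hLl 0 u, hΓ u]
      · rw [hL0 0, hΓ0]
    exact congrFun heq 1
  have h1 : g 1 = Γ' 1 := by
    have heq : (fun u => L 1 u) = fun u => Γ' u := by
      refine hp.eq_of_comp_eq (L 1).continuous Γ'.continuous ?_ 0 ?_
      · funext u
        show p (L 1 u) = p (Γ' u)
        rw [hLl 1 u, hΓ' u]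
      · rw [hL0 1, hΓ'0]
    exact congrFun heq 1
  rw [← h0, hkey, h1]

end Lifting


/-- The homomorphism `f⋆ : π₁(X, x) → π₁(Y, f x)` induced on fundamental groups by a
continuous map `f : X → Y`. -/
noncomputable def inducedPiHom {X Y : Type u} [TopologicalSpace X] [TopologicalSpace Y]
    (f : C(X, Y)) (x : X) : FundamentalGroup X x →* FundamentalGroup Y (f x) :=
  Functor.mapEnd (FundamentalGroupoid.mk x)
    (FundamentalGroupoid.fundamentalGroupoidFunctor.map
      (show TopCat.of X ⟶ TopCat.of Y from TopCat.ofHom f))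

/-- Let `p : E → B` be a covering map, `e ∈ E` and `b = p e`.
A class `[γ] ∈ π₁(B, b)` lies in the image of `p⋆ : π₁(E, e) → π₁(B, b)` if and only
if the unique lift of `γ` to `E` starting at `e` is a closed loop (ends at `e`). -/
theorem stmt3 {E B : Type u} [TopologicalSpace E] [TopologicalSpace B]
    {p : E → B} (hp : IsCoveringMap p) (e : E) (γ : Path (p e) (p e)) :
    (@FundamentalGroup.fromPath (TopCat.of B) _ (p e) ⟦γ⟧) ∈
        (inducedPiHom ⟨p, hp.continuous⟩ e).range ↔
      ∃ γ' : Path e e, ∀ t, p (γ' t) = γ t := by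
  constructor
  · rintro ⟨q, hq⟩
    obtain ⟨δp, hδp⟩ := Quotient.exists_rep (q : Path.Homotopic.Quotient e e)
    have hq2 : Path.Homotopic.Quotient.map (q : Path.Homotopic.Quotient e e)
        (⟨p, hp.continuous⟩ : C(E, B)) = (⟦γ⟧ : Path.Homotopic.Quotient (p e) (p e)) :=
      hq
    rw [← hδp] at hq2
    have hhom : (δp.map (ContinuousMap.continuous ⟨p, hp.continuous⟩)).Homotopic γ :=
      Quotient.exact hq2
    obtain ⟨h⟩ := hhom
    set H : C(unitInterval × unitInterval, B) := h.toHomotopy.toContinuousMap with hH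
    have happ : ∀ q, H q = h q := fun _ => rfl
    have hbase : ∀ s, H (s, 0) = p e := by
      intro s
      rw [happ, h.eq_fst s (by norm_num : (0 : unitInterval) ∈ ({0, 1} : Set unitInterval))]
      simp
    have htop : ∀ s : unitInterval, H (s, 1) = H (0, 1) := by
      intro s
      rw [happ, happ,
        h.eq_fst s (by norm_num : (1 : unitInterval) ∈ ({0, 1} : Set unitInterval)),
        h.eq_fst 0 (by norm_num : (1 : unitInterval) ∈ ({0, 1} : Set unitInterval))]
    have hΓ : ∀ u, p (δp.toContinuousMap u) = H (0, u) := by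
      intro u
      rw [happ, h.apply_zero]
      simp
    obtain ⟨δ, δpos, K, hK0, hKl⟩ := strip_lift hp H e hbase 1
    set L : C(unitInterval, E) :=
      K.comp ((ContinuousMap.const unitInterval 1).prodMk (ContinuousMap.id unitInterval)) with hL
    have hLl : ∀ u, p (L u) = H (1, u) := fun u => hKl 1 (by simpa using δpos) u
    have hL0 : L 0 = e := hK0 1
    have hend : δp.toContinuousMap 1 = L 1 :=
      monodromy_endpoint hp H e hbase htop hΓ (by simpa using δp.source) hLl hL0
    have hL1 : L 1 = e := by
      rw [← hend]; simpa using δp.target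
    refine ⟨⟨L, hL0, hL1⟩, fun t => ?_⟩
    show p (L t) = γ t
    rw [hLl t, happ, h.apply_one]
    rfl
  · rintro ⟨γ', hγ'⟩
    refine ⟨FundamentalGroup.fromPath (X := TopCat.of E) ⟦γ'⟧, ?_⟩
    have hmapeq : (γ'.map (ContinuousMap.continuous ⟨p, hp.continuous⟩) : Path (p e) (p e)) = γ := by
      ext t
      exact hγ' t
    show Path.Homotopic.Quotient.map (Path.Homotopic.Quotient.mk γ')
        (⟨p, hp.continuous⟩ : C(E, B)) = Path.Homotopic.Quotient.mk γ
    rw [← Path.Homotopic.Quotient.mk_map, hmapeq]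
end

section
/- Let F be the free group on generators σ₁, …, σ_k, let H be a subgroup of F, and let φ : F → F be a function satisfying: (1) φ(1) = 1; (2) α · (φ(α))⁻¹ ∈ H for every α ∈ F; (3) φ(h·α) = φ(α) for every h ∈ H and α ∈ F. Then H is generated by the set M = { t·σᵢ·(φ(t·σᵢ))⁻¹ : t ∈ φ(F), 1 ≤ i ≤ k }, where φ(F) denotes the range of φ. -/
/-- Reidemeister–Schreier generators. Let `F` be the free group on
`k` generators `σ₁, …, σ_k`, `H ≤ F` a subgroup, and `φ : F → F` a function representing
the right cosets of `H`, i.e. `φ 1 = 1`, `α (φ α)⁻¹ ∈ H` for all `α`, and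
`φ (h α) = φ α` for all `h ∈ H`, `α ∈ F`.  Then `H` is generated by
`M = { t σᵢ (φ (t σᵢ))⁻¹ : t ∈ range φ, 1 ≤ i ≤ k }`. -/
theorem stmt4 (k : ℕ) (H : Subgroup (FreeGroup (Fin k)))
    (φ : FreeGroup (Fin k) → FreeGroup (Fin k))
    (h1 : φ 1 = 1)
    (h2 : ∀ α : FreeGroup (Fin k), α * (φ α)⁻¹ ∈ H)
    (h3 : ∀ h ∈ H, ∀ α : FreeGroup (Fin k), φ (h * α) = φ α) :
    H = Subgroup.closure
      {x : FreeGroup (Fin k) | ∃ t ∈ Set.range φ, ∃ i : Fin k,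
        x = t * FreeGroup.of i * (φ (t * FreeGroup.of i))⁻¹} := by
  set M : Set (FreeGroup (Fin k)) :=
    {x : FreeGroup (Fin k) | ∃ t ∈ Set.range φ, ∃ i : Fin k,
        x = t * FreeGroup.of i * (φ (t * FreeGroup.of i))⁻¹} with hM
  -- key lemma: φ (φ α * β) = φ (α * β)
  have keyA : ∀ α β : FreeGroup (Fin k), φ (φ α * β) = φ (α * β) := by
    intro α β
    have : α * β = (α * (φ α)⁻¹) * (φ α * β) := by group
    rw [this, h3 _ (h2 α)]
  have keyB : ∀ t ∈ Set.range φ, φ t = t := by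
    rintro t ⟨α, rfl⟩
    have := keyA α 1
    simpa using this
  apply le_antisymm
  · -- H ≤ closure M
    intro h hh
    have key : ∀ w : FreeGroup (Fin k), ∀ t ∈ Set.range φ,
        t * w * (φ (t * w))⁻¹ ∈ Subgroup.closure M := by
      intro w
      induction w using FreeGroup.induction_on with
      | C1 =>
        intro t ht
        have : t * 1 * (φ (t * 1))⁻¹ = 1 := by
          rw [mul_one, keyB t ht]; group
        rw [this]; exact Subgroup.one_mem _
      | of i =>
        intro t ht
        exact Subgroup.subset_closure ⟨t, ht, i, rfl⟩
      | inv_of i _ =>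
        intro t ht
        set s := φ (t * (FreeGroup.of i)⁻¹) with hs
        have hsr : s ∈ Set.range φ := ⟨_, rfl⟩
        have hphis : φ (s * FreeGroup.of i) = t := by
          rw [hs, keyA]
          have : t * (FreeGroup.of i)⁻¹ * FreeGroup.of i = t := by group
          rw [this, keyB t ht]
        have hg : s * FreeGroup.of i * (φ (s * FreeGroup.of i))⁻¹ ∈
            Subgroup.closure M := Subgroup.subset_closure ⟨s, hsr, i, rfl⟩
        have := Subgroup.inv_mem _ hg
        rw [hphis] at this
        have heq : (s * FreeGroup.of i * t⁻¹)⁻¹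
            = t * (FreeGroup.of i)⁻¹ * (φ (t * (FreeGroup.of i)⁻¹))⁻¹ := by
          rw [← hs]; group
        rwa [heq] at this
      | mul x y ihx ihy =>
        intro t ht
        have h1' := ihx t ht
        have h2' := ihy (φ (t * x)) ⟨_, rfl⟩
        have := Subgroup.mul_mem _ h1' h2'
        have heq : t * x * (φ (t * x))⁻¹ * (φ (t * x) * y * (φ (φ (t * x) * y))⁻¹)
            = t * (x * y) * (φ (t * (x * y)))⁻¹ := by
          rw [keyA (t * x) y, ← mul_assoc]; group
        rwa [heq] at this
    have := key h 1 ⟨1, h1⟩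
    have hφh : φ (1 * h) = 1 := by
      rw [one_mul, ← mul_one h, h3 h hh, h1]
    rw [hφh] at this
    simpa using this
  · -- closure M ≤ H
    rw [Subgroup.closure_le]
    rintro x ⟨t, ht, i, rfl⟩
    exact h2 (t * FreeGroup.of i)
end

section
/- Let G be a group, let x₁, …, xₙ be elements of G, and let w be a quadratic word on x₁, …, xₙ, i.e. a product x_{i₁}^{ε₁} x_{i₂}^{ε₂} ⋯ x_{i_{2n}}^{ε_{2n}} (given by a list of 2n signed indices) in which, for each index i, the letter xᵢ occurs exactly once with exponent +1 and exactly once with exponent −1. If no two distinct indices are linked in w — where indices i ≠ j are linked if their four occurrences alternate along the word, occurring in the order i, j, i, j — then w = 1 in G. -/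
section QuadAux

variable {n : ℕ}

/-- Two distinct indices are linked in `L`. -/
def Quad.Linked (L : List (Fin n × Bool)) : Prop :=
  ∃ i j : Fin n, i ≠ j ∧ ∃ a b c d : ℕ,
    a < b ∧ b < c ∧ c < d ∧
    L[a]?.map Prod.fst = some i ∧ L[b]?.map Prod.fst = some j ∧
    L[c]?.map Prod.fst = some i ∧ L[d]?.map Prod.fst = some j

lemma Quad.linked_of_embed {M L : List (Fin n × Bool)} (f : ℕ → ℕ)
    (hf : ∀ a b, a < b → f a < f b) (h : ∀ k, M[k]? = L[f k]?) :
    Quad.Linked M → Quad.Linked L := by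
  rintro ⟨i, j, hij, a, b, c, d, hab, hbc, hcd, ha, hb, hc, hd⟩
  exact ⟨i, j, hij, f a, f b, f c, f d, hf _ _ hab, hf _ _ hbc, hf _ _ hcd,
    by rw [← h]; exact ha, by rw [← h]; exact hb,
    by rw [← h]; exact hc, by rw [← h]; exact hd⟩

lemma Quad.two_le_count {α : Type*} [BEq α] [LawfulBEq α] {L : List α} {a : α} {p q : ℕ}
    (hpq : p < q) (hp : L[p]? = some a) (hq : L[q]? = some a) : 2 ≤ L.count a := by
  have h1 : a ∈ L.take (p + 1) := by
    exact List.mem_of_getElem? (i := p)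
      (by rw [List.getElem?_take_of_lt (Nat.lt_succ_self p)]; exact hp)
  have h2 : a ∈ L.drop (p + 1) := by
    exact List.mem_of_getElem? (i := q - (p + 1))
      (by rw [List.getElem?_drop, show p + 1 + (q - (p + 1)) = q by omega]; exact hq)
  have ht := List.take_append_drop (p + 1) L
  have c1 : 1 ≤ (L.take (p + 1)).count a := List.count_pos_iff.mpr h1
  have c2 : 1 ≤ (L.drop (p + 1)).count a := List.count_pos_iff.mpr h2
  calc 2 = 1 + 1 := rfl
    _ ≤ (L.take (p + 1)).count a + (L.drop (p + 1)).count a := Nat.add_le_add c1 c2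
    _ = L.count a := by rw [← List.count_append, ht]

lemma Quad.adj (L : List (Fin n × Bool)) (hne : L ≠ [])
    (hc : ∀ i : Fin n, L.count (i, true) = L.count (i, false) ∧ L.count (i, true) ≤ 1)
    (hu : ¬ Quad.Linked L) :
    ∃ (p : ℕ) (i : Fin n) (b : Bool), L[p]? = some (i, b) ∧ L[p + 1]? = some (i, !b) := by
  classical
  have hmem : ∀ (i : Fin n) (b : Bool), (i, b) ∈ L →
      L.count (i, b) = 1 ∧ L.count (i, !b) = 1 := by
    intro i b hb
    have h1 := (hc i).1
    have h2 := (hc i).2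
    have h3 : 1 ≤ L.count (i, b) := List.count_pos_iff.mpr hb
    cases b <;> simp only [Bool.not_true, Bool.not_false] <;> omega
  set Q : ℕ → Prop := fun d => ∃ (p : ℕ) (i : Fin n),
    L[p]?.map Prod.fst = some i ∧ L[p + d + 1]?.map Prod.fst = some i with hQdef
  have hex : ∃ d, Q d := by
    obtain ⟨⟨i, b⟩, hm⟩ := List.exists_mem_of_ne_nil L hne
    obtain ⟨hc1, hc2⟩ := hmem i b hm
    have hm' : (i, !b) ∈ L := by
      have : 0 < L.count (i, !b) := by omega
      exact List.count_pos_iff.mp this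
    obtain ⟨p, hp⟩ := List.mem_iff_getElem?.mp hm
    obtain ⟨q, hq⟩ := List.mem_iff_getElem?.mp hm'
    have hpq : p ≠ q := by
      intro h; rw [h, hq] at hp
      have : (!b) = b := ((Prod.mk.injEq _ _ _ _).mp (Option.some.inj hp)).2
      simp at this
    rcases Nat.lt_or_ge p q with h | h
    · refine ⟨q - p - 1, p, i, by rw [hp]; rfl, ?_⟩
      have he : p + (q - p - 1) + 1 = q := by omega
      rw [he, hq]; rfl
    · have h' : q < p := lt_of_le_of_ne h (Ne.symm hpq)
      refine ⟨p - q - 1, q, i, by rw [hq]; rfl, ?_⟩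
      have he : q + (p - q - 1) + 1 = p := by omega
      rw [he, hp]; rfl
  obtain ⟨p, i, hp, hp'⟩ := Nat.find_spec hex
  have hd0 : Nat.find hex = 0 := by
    by_contra hd0
    have hd0' : 0 < Nat.find hex := Nat.pos_of_ne_zero hd0
    set d := Nat.find hex with hd
    obtain ⟨v, hv, hv1⟩ := Option.map_eq_some_iff.mp hp'
    obtain ⟨u, hu', hu1⟩ := Option.map_eq_some_iff.mp hp
    have hvlen : p + d + 1 < L.length := (List.getElem?_eq_some_iff.mp hv).1
    have hp1len : p + 1 < L.length := by omega
    have hmid : L[p + 1]? = some (L[p + 1]'hp1len) := List.getElem?_eq_getElem hp1len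
    set j := (L[p + 1]'hp1len).1 with hj
    set c := (L[p + 1]'hp1len).2 with hcc
    have hmid' : L[p + 1]? = some (j, c) := by rw [hmid]
    have hmidfst : L[p + 1]?.map Prod.fst = some j := by rw [hmid']; rfl
    have hji : j ≠ i := by
      intro h
      have hQ0 : Q 0 := ⟨p, i, hp, by rw [show p + 0 + 1 = p + 1 from rfl, hmid', h]; rfl⟩
      exact Nat.find_min hex hd0' hQ0
    have hjmem : (j, c) ∈ L := List.mem_of_getElem? hmid'
    obtain ⟨_, hc2⟩ := hmem j c hjmem
    have hm2 : (j, !c) ∈ L := List.count_pos_iff.mp (by omega)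
    obtain ⟨s, hs⟩ := List.mem_iff_getElem?.mp hm2
    have hsfst : L[s]?.map Prod.fst = some j := by rw [hs]; rfl
    have hsp : s ≠ p := by
      intro h; rw [h, hu'] at hs
      have : u.1 = j := by rw [Option.some.inj hs]
      exact hji (by rw [← this, hu1])
    have hsp1 : s ≠ p + 1 := by
      intro h; rw [h, hmid'] at hs
      have : c = !c := ((Prod.mk.injEq _ _ _ _).mp (Option.some.inj hs)).2
      simp at this
    have hspd : s ≠ p + d + 1 := by
      intro h; rw [h, hv] at hs
      have : v.1 = j := by rw [Option.some.inj hs]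
      exact hji (by rw [← this, hv1])
    rcases Nat.lt_trichotomy s p with h | h | h
    · exact hu ⟨j, i, hji, s, p, p + 1, p + d + 1, h, Nat.lt_succ_self p, by omega,
        hsfst, hp, hmidfst, hp'⟩
    · exact hsp h
    · -- s > p
      rcases Nat.lt_trichotomy s (p + d + 1) with h2 | h2 | h2
      · -- p < s < p+d+1, s ≠ p+1, so p+2 ≤ s ≤ p+d
        have hs2 : p + 2 ≤ s := by omega
        have hQs : Q (s - p - 2) := by
          refine ⟨p + 1, j, hmidfst, ?_⟩
          have he : p + 1 + (s - p - 2) + 1 = s := by omega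
          rw [he]; exact hsfst
        exact Nat.find_min hex (by omega) hQs
      · exact hspd h2
      · exact hu ⟨i, j, Ne.symm hji, p, p + 1, p + d + 1, s, Nat.lt_succ_self p,
          by omega, h2, hp, hmidfst, hp', hsfst⟩
  rw [hd0] at hp'
  obtain ⟨⟨i1, b1⟩, hu1, hu1'⟩ := Option.map_eq_some_iff.mp hp
  obtain ⟨⟨i2, b2⟩, hu2, hu2'⟩ := Option.map_eq_some_iff.mp hp'
  simp only at hu1' hu2'
  have hi1 : i1 = i := hu1'
  have hi2 : i2 = i := hu2'
  rw [hi1] at hu1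
  rw [hi2, show p + 0 + 1 = p + 1 from rfl] at hu2
  have hb : b2 = !b1 := by
    by_contra hbb
    have hbb' : b2 = b1 := by cases b1 <;> cases b2 <;> simp_all
    rw [hbb'] at hu2
    have h2 := Quad.two_le_count (Nat.lt_succ_self p) hu1 hu2
    have h3 := (hc i).1
    have h4 := (hc i).2
    cases b1 <;> omega
  rw [hb] at hu2
  exact ⟨p, i, b1, hu1, hu2⟩

lemma Quad.key {G : Type*} [Group G] {n : ℕ} (x : Fin n → G) :
    ∀ (N : ℕ) (L : List (Fin n × Bool)), L.length ≤ N →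
    (∀ i : Fin n, L.count (i, true) = L.count (i, false) ∧ L.count (i, true) ≤ 1) →
    ¬ Quad.Linked L →
    (L.map (fun p => if p.2 then x p.1 else (x p.1)⁻¹)).prod = 1 := by
  intro N
  induction N with
  | zero =>
    intro L h _ _
    have : L = [] := List.length_eq_zero_iff.mp (Nat.le_zero.mp h)
    simp [this]
  | succ N ih =>
    intro L hlen hc hu
    rcases eq_or_ne L [] with rfl | hne
    · simp
    obtain ⟨p, i, b, hp, hp1⟩ := Quad.adj L hne hc hu
    have hplen : p + 1 < L.length := (List.getElem?_eq_some_iff.mp hp1).1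
    have hpe : L[p]'(by omega) = (i, b) := by
      have := List.getElem?_eq_getElem (show p < L.length by omega)
      rw [hp] at this; exact (Option.some.inj this).symm
    have hp1e : L[p + 1]'hplen = (i, !b) := by
      have := List.getElem?_eq_getElem hplen
      rw [hp1] at this; exact (Option.some.inj this).symm
    have hdecomp : L = L.take p ++ (i, b) :: (i, !b) :: L.drop (p + 2) := by
      conv_lhs => rw [← List.take_append_drop p L]
      congr 1
      rw [List.drop_eq_getElem_cons (show p < L.length by omega), hpe]
      congr 1
      rw [List.drop_eq_getElem_cons hplen, hp1e]
    set M := L.take p ++ L.drop (p + 2) with hM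
    have hMget : ∀ k, M[k]? = L[if k < p then k else k + 2]? := by
      intro k
      rw [hM]
      split
      · rw [List.getElem?_append_left (by rw [List.length_take]; omega)]
        exact List.getElem?_take_of_lt ‹k < p›
      · rw [List.getElem?_append_right (by rw [List.length_take]; omega),
          List.getElem?_drop]
        congr 1
        rw [List.length_take]
        omega
    have hcount : ∀ v : Fin n × Bool,
        L.count v = M.count v + ([(i, b), (i, !b)] : List _).count v := by
      intro v
      conv_lhs => rw [hdecomp]
      rw [show ((i, b) :: (i, !b) :: L.drop (p + 2)) =
          [(i, b), (i, !b)] ++ L.drop (p + 2) from rfl,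
        List.count_append, List.count_append, hM, List.count_append]
      omega
    have hmidc : ∀ j : Fin n, ([(i, b), (i, !b)] : List _).count (j, true) =
        ([(i, b), (i, !b)] : List _).count (j, false) := by
      intro j
      rcases eq_or_ne j i with rfl | hji
      · cases b <;> simp [List.count_cons]
      · cases b <;> simp [List.count_cons, List.count_nil, hji, Prod.ext_iff]
    have hc' : ∀ j : Fin n, M.count (j, true) = M.count (j, false) ∧
        M.count (j, true) ≤ 1 := by
      intro j
      have h1 := hcount (j, true)
      have h2 := hcount (j, false)
      have h3 := (hc j).1
      have h4 := (hc j).2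
      have h5 := hmidc j
      omega
    have hu' : ¬ Quad.Linked M := by
      intro h
      exact hu (Quad.linked_of_embed (fun k => if k < p then k else k + 2)
        (by intro a b' hab; split <;> split <;> omega) hMget h)
    have hMlen : M.length = L.length - 2 := by
      rw [hM, List.length_append, List.length_take, List.length_drop]; omega
    have hprod : (L.map (fun p => if p.2 then x p.1 else (x p.1)⁻¹)).prod =
        (M.map (fun p => if p.2 then x p.1 else (x p.1)⁻¹)).prod := by
      conv_lhs => rw [hdecomp]
      rw [hM]
      simp only [List.map_append, List.map_cons, List.prod_append, List.prod_cons]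
      cases b <;> simp [← mul_assoc]
    rw [hprod]
    exact ih M (by omega) hc' hu'

end QuadAux

/-- Let `w` be a quadratic word on `x₁, …, xₙ` in a group `G`,
given by a list `L` of `2n` signed letters in which every index occurs exactly once
with exponent `+1` and exactly once with exponent `−1`.  If no two distinct indices
are linked in `w` (indices `i ≠ j` are linked if their four occurrences alternate
along the word in the order `i, j, i, j`), then `w = 1` in `G`. -/
theorem stmt9 {G : Type*} [Group G] (n : ℕ) (x : Fin n → G)
    (L : List (Fin n × Bool)) (hlen : L.length = 2 * n)
    (hquad : ∀ i : Fin n, L.count (i, true) = 1 ∧ L.count (i, false) = 1)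
    (hunlinked : ¬ ∃ i j : Fin n, i ≠ j ∧ ∃ a b c d : ℕ,
        a < b ∧ b < c ∧ c < d ∧
        L[a]?.map Prod.fst = some i ∧ L[b]?.map Prod.fst = some j ∧
        L[c]?.map Prod.fst = some i ∧ L[d]?.map Prod.fst = some j) :
    (L.map (fun p => if p.2 then x p.1 else (x p.1)⁻¹)).prod = 1 := by
  refine Quad.key x L.length L le_rfl (fun i => ?_) (fun h => hunlinked h)
  obtain ⟨h1, h2⟩ := hquad i
  omega
end

section
/- Let G be a group, let x₁, …, xₙ be elements of G, and let w be a quadratic word on x₁, …, xₙ, i.e. a product x_{i₁}^{ε₁} x_{i₂}^{ε₂} ⋯ x_{i_{2n}}^{ε_{2n}} in which, for each index i, the letter xᵢ occurs exactly once with exponent +1 and exactly once with exponent −1. Then there exist a natural number k ≤ ⌊n/2⌋ and elements a₁, b₁, …, a_k, b_k of G such that w = [a₁, b₁] · [a₂, b₂] ⋯ [a_k, b_k], where [u, v] = u⁻¹ v⁻¹ u v. -/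
/-!
Induct on the length of the word. Its first letter `y` is linked to a later `y⁻¹`, so
`w = y P y⁻¹ S`. If `P` is itself closed under taking partners, `w` is a conjugate of the
quadratic word `P` times the quadratic word `S`. Otherwise some letter `z` of `P` is linked to
a letter of `S`, so `w = y A z B y⁻¹ C z⁻¹ D`, which is one commutator times the quadratic
word `C B A D`, shorter by four letters. Each commutator thus costs at least four letters.
-/

section CommutatorProduct

variable {G : Type*} [Group G]

def commProd (l : List (G × G)) : G := (l.map fun p => p.1⁻¹ * p.2⁻¹ * p.1 * p.2).prod

def IsProdCommutatorsLE (k : ℕ) (g : G) : Prop :=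
  ∃ l : List (G × G), l.length ≤ k ∧ commProd l = g

lemma isProdCommutatorsLE_one (k : ℕ) : IsProdCommutatorsLE k (1 : G) :=
  ⟨[], Nat.zero_le k, rfl⟩

lemma isProdCommutatorsLE_commutator (a b : G) : IsProdCommutatorsLE 1 (a⁻¹ * b⁻¹ * a * b) :=
  ⟨[(a, b)], le_rfl, by simp [commProd]⟩

lemma IsProdCommutatorsLE.mul {k m : ℕ} {g h : G} (hg : IsProdCommutatorsLE k g)
    (hh : IsProdCommutatorsLE m h) : IsProdCommutatorsLE (k + m) (g * h) := by
  obtain ⟨l₁, hl₁, rfl⟩ := hg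
  obtain ⟨l₂, hl₂, rfl⟩ := hh
  exact ⟨l₁ ++ l₂, by simp only [List.length_append]; omega, by simp [commProd]⟩

lemma IsProdCommutatorsLE.conj {k : ℕ} {g : G} (hg : IsProdCommutatorsLE k g) (c : G) :
    IsProdCommutatorsLE k (c * g * c⁻¹) := by
  obtain ⟨l, hl, rfl⟩ := hg
  refine ⟨l.map (Prod.map (MulAut.conj c) (MulAut.conj c)), by simpa using hl, ?_⟩
  have : commProd (l.map (Prod.map (MulAut.conj c) (MulAut.conj c))) =
      MulAut.conj c (commProd l) := by
    simp only [commProd, map_list_prod, List.map_map, Function.comp_def, Prod.map_fst,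
      Prod.map_snd, map_mul, map_inv]
  rw [this, MulAut.conj_apply]

lemma IsProdCommutatorsLE.mono {k m : ℕ} {g : G} (hg : IsProdCommutatorsLE k g) (hkm : k ≤ m) :
    IsProdCommutatorsLE m g :=
  let ⟨l, hl, hg⟩ := hg; ⟨l, hl.trans hkm, hg⟩

lemma IsProdCommutatorsLE.exists_ofFn {k : ℕ} {g : G} (hg : IsProdCommutatorsLE k g) :
    ∃ m ≤ k, ∃ a b : Fin m → G,
      g = (List.ofFn (fun i : Fin m => (a i)⁻¹ * (b i)⁻¹ * a i * b i)).prod := by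
  obtain ⟨l, hl, rfl⟩ := hg
  refine ⟨l.length, hl, fun i => (l.get i).1, fun i => (l.get i).2, ?_⟩
  conv_lhs => rw [commProd, ← List.ofFn_get l, List.map_ofFn]
  rfl

end CommutatorProduct

lemma mul_linked_eq_commutator_mul {G : Type*} [Group G] (y z A B C D : G) :
    y * A * z * B * y⁻¹ * C * z⁻¹ * D =
      (C * B * y⁻¹)⁻¹ * (C * z⁻¹ * A⁻¹ * B⁻¹ * C⁻¹)⁻¹ * (C * B * y⁻¹) *
        (C * z⁻¹ * A⁻¹ * B⁻¹ * C⁻¹) * (C * B * A * D) := by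
  group

namespace QuadraticWord

variable {α G : Type*} [Group G]

def letter (x : α → G) (p : α × Bool) : G := if p.2 then x p.1 else (x p.1)⁻¹

def partner (p : α × Bool) : α × Bool := (p.1, !p.2)

@[simp] lemma partner_partner (p : α × Bool) : partner (partner p) = p := by simp [partner]

lemma partner_ne (p : α × Bool) : partner p ≠ p := by simp [partner, Prod.ext_iff]

lemma letter_partner (x : α → G) (p : α × Bool) :
    letter x (partner p) = (letter x p)⁻¹ := by
  cases p with | mk i b => cases b <;> simp [letter, partner]

def PartnerClosed (L : List (α × Bool)) : Prop := ∀ p ∈ L, partner p ∈ L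

/-- A quadratic word on the letters it contains: each of them occurs exactly once with
each exponent. -/
def IsQuadratic (L : List (α × Bool)) : Prop := L.Nodup ∧ PartnerClosed L

lemma IsQuadratic.of_perm_append {L M N : List (α × Bool)} (hL : IsQuadratic L)
    (hperm : L.Perm (M ++ N)) (hM : PartnerClosed M) : IsQuadratic N := by
  have hMN : (M ++ N).Nodup := hperm.nodup_iff.mp hL.1
  refine ⟨(List.nodup_append.mp hMN).2.1, fun p hp => ?_⟩
  have hpartner : partner p ∈ M ++ N := hperm.subset (hL.2 p (hperm.symm.subset (by simp [hp])))
  rcases List.mem_append.mp hpartner with hM' | hN'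
  · exact absurd rfl ((List.nodup_append.mp hMN).2.2 _ (by simpa using hM _ hM') _ hp)
  · exact hN'

lemma PartnerClosed.cons_partner_cons {P : List (α × Bool)} (hP : PartnerClosed P)
    (p : α × Bool) :
    PartnerClosed (p :: partner p :: P) := by
  intro q hq
  simp only [List.mem_cons] at hq ⊢
  rcases hq with rfl | rfl | hq
  · exact Or.inr (Or.inl rfl)
  · exact Or.inl (partner_partner p)
  · exact Or.inr (Or.inr (hP q hq))

lemma IsQuadratic.exists_eq_append_partner {p : α × Bool} {T : List (α × Bool)}
    (hL : IsQuadratic (p :: T)) : ∃ P S, T = P ++ partner p :: S :=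
  List.append_of_mem (List.mem_of_ne_of_mem (partner_ne p)
    (hL.2 p List.mem_cons_self))

lemma IsQuadratic.partner_mem_of_partner_notMem {p q : α × Bool} {P S : List (α × Bool)}
    (hL : IsQuadratic (p :: (P ++ partner p :: S))) (hq : q ∈ P) (hq' : partner q ∉ P) :
    partner q ∈ S := by
  obtain ⟨hpL, hPS⟩ := List.nodup_cons.mp hL.1
  have hpP : p ∉ P := fun h => hpL (List.mem_append_left _ h)
  have hfP : partner p ∉ P := fun h => (List.nodup_cons.mp (List.nodup_middle.mp hPS)).1
    (List.mem_append_left _ h)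
  have hmem := hL.2 q (by simp [hq])
  simp only [List.mem_cons, List.mem_append] at hmem
  rcases hmem with h | h | h | h
  · exact absurd (by rw [← h, partner_partner]; exact hq) hfP
  · exact absurd h hq'
  · exact absurd (by rw [← partner_partner p, ← h, partner_partner]; exact hq) hpP
  · exact h

theorem IsQuadratic.isProdCommutatorsLE (x : α → G) :
    ∀ L : List (α × Bool), IsQuadratic L →
      IsProdCommutatorsLE (L.length / 4) (L.map (letter x)).prod
  | [], _ => isProdCommutatorsLE_one _
  | p :: T, hL => by
    classical
    obtain ⟨P, S, rfl⟩ := hL.exists_eq_append_partner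
    by_cases hP : PartnerClosed P
    · have hPq : IsQuadratic P := ⟨hL.1.sublist (by simp), hP⟩
      have hSq : IsQuadratic S := hL.of_perm_append (M := p :: partner p :: P)
        (List.perm_iff_count.2 fun a => by simp only [List.count_cons, List.count_append]; omega)
        (hP.cons_partner_cons p)
      have hw := ((hPq.isProdCommutatorsLE x P).conj (letter x p)).mul
        (hSq.isProdCommutatorsLE x S)
      simp only [List.map_cons, List.map_append, List.prod_cons, List.prod_append,
        letter_partner, ← mul_assoc] at hw ⊢
      exact hw.mono (by simp only [List.length_cons, List.length_append]; omega)
    · obtain ⟨q, hqP, hq'⟩ : ∃ q ∈ P, partner q ∉ P := by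
        simpa only [PartnerClosed, not_forall, exists_prop] using hP
      have hqS := hL.partner_mem_of_partner_notMem hqP hq'
      obtain ⟨A, B, rfl⟩ := List.append_of_mem hqP
      obtain ⟨C, D, rfl⟩ := List.append_of_mem hqS
      have hM : PartnerClosed [p, partner p, q, partner q] :=
        (PartnerClosed.cons_partner_cons (fun _ h => by simp at h) q).cons_partner_cons p
      have hq : IsQuadratic (C ++ B ++ A ++ D) := hL.of_perm_append
        (List.perm_iff_count.2 fun a => by
          simp only [List.count_cons, List.count_append, List.count_nil]; omega)
        hM
      have hw := hq.isProdCommutatorsLE x _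
      simp only [List.map_cons, List.map_append, List.prod_cons, List.prod_append,
        letter_partner, ← mul_assoc] at hw ⊢
      rw [mul_linked_eq_commutator_mul]
      refine ((isProdCommutatorsLE_commutator _ _).mul hw).mono ?_
      simp only [List.length_cons, List.length_append]
      omega
termination_by L => L.length

lemma isQuadratic_of_count_eq_one [DecidableEq α] {L : List (α × Bool)}
    (h : ∀ i, L.count (i, true) = 1 ∧ L.count (i, false) = 1) : IsQuadratic L := by
  have hcount : ∀ p : α × Bool, L.count p = 1 := fun ⟨i, b⟩ => by
    cases b
    exacts [(h i).2, (h i).1]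
  refine ⟨List.nodup_iff_count_le_one.2 fun p => (hcount p).le, fun p _ => ?_⟩
  exact List.count_pos_iff.1 (by rw [hcount]; exact Nat.one_pos)

end QuadraticWord

/-- Let `w` be a quadratic word on `x₁, …, xₙ` in a group `G`,
given by a list `L` of `2n` signed letters in which every index occurs exactly once
with exponent `+1` and exactly once with exponent `−1`.  Then there are `k ≤ ⌊n/2⌋`
and elements `a₁, b₁, …, a_k, b_k` of `G` with
`w = [a₁, b₁] ⋯ [a_k, b_k]`, where `[u, v] = u⁻¹ v⁻¹ u v`. -/
theorem stmt10 {G : Type*} [Group G] (n : ℕ) (x : Fin n → G)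
    (L : List (Fin n × Bool)) (hlen : L.length = 2 * n)
    (hquad : ∀ i : Fin n, L.count (i, true) = 1 ∧ L.count (i, false) = 1) :
    ∃ (k : ℕ), k ≤ n / 2 ∧ ∃ a b : Fin k → G,
      (L.map (fun p => if p.2 then x p.1 else (x p.1)⁻¹)).prod =
        (List.ofFn (fun i : Fin k => (a i)⁻¹ * (b i)⁻¹ * a i * b i)).prod := by
  obtain ⟨k, hk, a, b, hw⟩ :=
    ((QuadraticWord.isQuadratic_of_count_eq_one hquad).isProdCommutatorsLE x L).exists_ofFn
  exact ⟨k, hk.trans_eq (by omega), a, b, hw⟩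
end
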